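/- arXiv:1505.04617 — 4 statements merged into one kernel-verified Lean document; each statement's English description precedes it below -/
import Mathlib

section
/- Let A ∈ ℝ^{m×d}, Y ∈ ℝ^{m×n}, let 1 ≤ q < 2, and let X_k, X_{k+1} ∈ ℝ^{d×n} be such that every row of AX_k − Y is nonzero. Then Σ_{i=1}^m ‖(AX_{k+1} − Y)^i‖₂^q − (q/2)·Σ_{i=1}^m ‖(AX_{k+1} − Y)^i‖₂² / ‖(AX_k − Y)^i‖₂^{2−q} ≤ (1 − q/2)·Σ_{i=1}^m ‖(AX_k − Y)^i‖₂^q. -/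
/-!
The map `t ↦ t ^ (q / 2)` is concave on `[0, ∞)` for `0 ≤ q ≤ 2`, so at `t = a²` it lies below its
tangent line at `b²`: `a ^ q ≤ b ^ q + (q / 2) (a² - b²) / b ^ (2 - q)`. Summing this bound over the
rows, with `a` and `b` the row norms of the two residuals, gives the inequality. The pointwise bound
is weighted AM–GM with weights `q / 2`, `1 - q / 2` applied to `a² / b ^ (2 - q)` and `b ^ q`.
-/

open Matrix

/-- Euclidean norm of the i-th row of a matrix. -/
noncomputable def rowNorm {m n : ℕ} (M : Matrix (Fin m) (Fin n) ℝ) (i : Fin m) : ℝ :=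
  Real.sqrt (∑ j, M i j ^ 2)

theorem Real.rpow_le_mul_sq_div_rpow_add_mul_rpow {a b q : ℝ} (ha : 0 ≤ a) (hb : 0 < b)
    (hq0 : 0 ≤ q) (hq2 : q ≤ 2) :
    a ^ q ≤ q / 2 * (a ^ 2 / b ^ (2 - q)) + (1 - q / 2) * b ^ q := by
  have hgm := Real.geom_mean_le_arith_mean2_weighted (w₁ := q / 2) (w₂ := 1 - q / 2)
    (p₁ := a ^ 2 / b ^ (2 - q)) (p₂ := b ^ q) (by linarith) (by linarith) (by positivity)
    (by positivity) (by ring)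
  have hprod : (a ^ 2 / b ^ (2 - q)) ^ (q / 2) * (b ^ q) ^ (1 - q / 2) = a ^ q := by
    rw [Real.div_rpow (by positivity) (by positivity), ← Real.rpow_natCast a 2,
      ← Real.rpow_mul ha, ← Real.rpow_mul hb.le, ← Real.rpow_mul hb.le, div_mul_eq_mul_div,
      show q * (1 - q / 2) = (2 - q) * (q / 2) by ring,
      mul_div_cancel_right₀ _ (Real.rpow_pos_of_pos hb _).ne']
    rw [Nat.cast_ofNat, mul_div_cancel₀ q two_ne_zero]
  rwa [hprod] at hgm

lemma rowNorm_nonneg {m n : ℕ} (M : Matrix (Fin m) (Fin n) ℝ) (i : Fin m) :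
    0 ≤ rowNorm M i :=
  Real.sqrt_nonneg _

lemma rowNorm_pos {m n : ℕ} {M : Matrix (Fin m) (Fin n) ℝ} {i : Fin m} (h : M i ≠ 0) :
    0 < rowNorm M i := by
  obtain ⟨j, hj⟩ := Function.ne_iff.mp h
  exact Real.sqrt_pos.mpr <|
    Finset.sum_pos' (fun j _ => sq_nonneg _) ⟨j, Finset.mem_univ j, sq_pos_of_ne_zero hj⟩

/-- Inequality (3.11): for 1 ≤ q < 2, if every row of A·Xk − Y is nonzero, then
Σᵢ ‖(A·Xk₁−Y)ⁱ‖₂^q − (q/2)·Σᵢ ‖(A·Xk₁−Y)ⁱ‖₂²/‖(A·Xk−Y)ⁱ‖₂^{2−q}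
  ≤ (1 − q/2)·Σᵢ ‖(A·Xk−Y)ⁱ‖₂^q. -/
theorem stmt_4 {m d n : ℕ} (A : Matrix (Fin m) (Fin d) ℝ) (Y : Matrix (Fin m) (Fin n) ℝ)
    (q : ℝ) (hq1 : 1 ≤ q) (hq2 : q < 2)
    (Xk Xk1 : Matrix (Fin d) (Fin n) ℝ)
    (hrow : ∀ i, (A * Xk - Y) i ≠ 0) :
    ∑ i, rowNorm (A * Xk1 - Y) i ^ q
      - (q / 2) * ∑ i, rowNorm (A * Xk1 - Y) i ^ 2 / rowNorm (A * Xk - Y) i ^ (2 - q)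
    ≤ (1 - q / 2) * ∑ i, rowNorm (A * Xk - Y) i ^ q := by
  have hrows : ∑ i, rowNorm (A * Xk1 - Y) i ^ q ≤
      ∑ i, (q / 2 * (rowNorm (A * Xk1 - Y) i ^ 2 / rowNorm (A * Xk - Y) i ^ (2 - q))
        + (1 - q / 2) * rowNorm (A * Xk - Y) i ^ q) :=
    Finset.sum_le_sum fun i _ => Real.rpow_le_mul_sq_div_rpow_add_mul_rpow
      (rowNorm_nonneg _ i) (rowNorm_pos (hrow i)) (by linarith) hq2.le
  rw [Finset.sum_add_distrib, ← Finset.mul_sum, ← Finset.mul_sum] at hrows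
  linarith
end

section
/- Let 0 < p < 2 and let X_k, X_{k+1} ∈ ℝ^{d×n} be such that every row of X_k is nonzero. Then Σ_{i=1}^d ‖X_{k+1}^i‖₂^p − (p/2)·Σ_{i=1}^d ‖X_{k+1}^i‖₂² / ‖X_k^i‖₂^{2−p} ≤ (1 − p/2)·Σ_{i=1}^d ‖X_k^i‖₂^p. -/
open Matrix

lemma aux_pointwise (p a b : ℝ) (hp0 : 0 < p) (hp2 : p < 2) (ha : 0 ≤ a) (hb : 0 < b) :
    a ^ p ≤ (p / 2) * (a ^ 2 / b ^ (2 - p)) + (1 - p / 2) * b ^ p := by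
  have key := Real.geom_mean_le_arith_mean2_weighted (w₁ := p / 2) (w₂ := 1 - p / 2)
    (p₁ := a ^ 2 / b ^ (2 - p)) (p₂ := b ^ p) (by linarith) (by linarith)
    (by positivity) (by positivity) (by ring)
  have hc : (a ^ 2 / b ^ (2 - p)) ^ (p / 2) * (b ^ p) ^ (1 - p / 2) = a ^ p := by
    rw [Real.div_rpow (by positivity) (by positivity), ← Real.rpow_natCast a 2,
      ← Real.rpow_mul ha, ← Real.rpow_mul hb.le, ← Real.rpow_mul hb.le]
    have h1 : (Nat.cast 2 : ℝ) * (p / 2) = p := by push_cast; ring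
    have h2 : p * (1 - p / 2) = (2 - p) * (p / 2) := by ring
    rw [h1, h2, div_mul_cancel₀]
    exact ne_of_gt (Real.rpow_pos_of_pos hb _)
  linarith [hc ▸ key]

/-- Inequality (3.12): for 0 < p < 2, if every row of Xk is nonzero, then
Σᵢ ‖Xk₁ⁱ‖₂^p − (p/2)·Σᵢ ‖Xk₁ⁱ‖₂²/‖Xkⁱ‖₂^{2−p} ≤ (1 − p/2)·Σᵢ ‖Xkⁱ‖₂^p. -/
theorem stmt_5 {d n : ℕ} (p : ℝ) (hp0 : 0 < p) (hp2 : p < 2)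
    (Xk Xk1 : Matrix (Fin d) (Fin n) ℝ)
    (hrow : ∀ i, Xk i ≠ 0) :
    ∑ i, rowNorm Xk1 i ^ p
      - (p / 2) * ∑ i, rowNorm Xk1 i ^ 2 / rowNorm Xk i ^ (2 - p)
    ≤ (1 - p / 2) * ∑ i, rowNorm Xk i ^ p := by
  have hbpos : ∀ i, 0 < rowNorm Xk i := by
    intro i
    obtain ⟨j, hj⟩ := Function.ne_iff.mp (hrow i)
    exact Real.sqrt_pos.mpr (Finset.sum_pos' (fun j _ => sq_nonneg _)
      ⟨j, Finset.mem_univ j, pow_two_pos_of_ne_zero hj⟩)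
  have h : ∀ i ∈ Finset.univ, rowNorm Xk1 i ^ p ≤
      (p / 2) * (rowNorm Xk1 i ^ 2 / rowNorm Xk i ^ (2 - p)) + (1 - p / 2) * rowNorm Xk i ^ p :=
    fun i _ => aux_pointwise p _ _ hp0 hp2 (Real.sqrt_nonneg _) (hbpos i)
  have := Finset.sum_le_sum h
  rw [Finset.sum_add_distrib, ← Finset.mul_sum, ← Finset.mul_sum] at this
  linarith
end

section
/- Let A ∈ ℝ^{m×d}, Y ∈ ℝ^{m×n}, let 1 ≤ q < 2, and let X_k, X_{k+1} ∈ ℝ^{d×n} be such that every row of AX_k − Y is nonzero. Then equality holds in the inequality Σ_{i=1}^m ‖(AX_{k+1} − Y)^i‖₂^q − (q/2)·Σ_{i=1}^m ‖(AX_{k+1} − Y)^i‖₂² / ‖(AX_k − Y)^i‖₂^{2−q} ≤ (1 − q/2)·Σ_{i=1}^m ‖(AX_k − Y)^i‖₂^q if and only if ‖(AX_{k+1} − Y)^i‖₂ = ‖(AX_k − Y)^i‖₂ for every i = 1, …, m. -/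
open Matrix

lemma aux_pow_div {a : ℝ} (ha : 0 < a) (q : ℝ) : a ^ (2 - q) = a ^ 2 / a ^ q := by
  rw [show (2 - q : ℝ) = ((2:ℕ):ℝ) - q by norm_num, Real.rpow_sub ha, Real.rpow_natCast]

lemma aux_rw {a b q : ℝ} (ha : 0 < a) : b ^ 2 / a ^ (2 - q) = b ^ 2 / a ^ 2 * a ^ q := by
  have hq : (0:ℝ) < a ^ q := Real.rpow_pos_of_pos ha q
  rw [aux_pow_div ha]
  field_simp

lemma aux_eq {a q : ℝ} (ha : 0 < a) :
    a ^ q - q / 2 * (a ^ 2 / a ^ (2 - q)) = (1 - q / 2) * a ^ q := by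
  rw [aux_rw ha]
  have : a ^ 2 / a ^ 2 = 1 := by
    field_simp
  rw [this]; ring

lemma aux_lt {a b q : ℝ} (ha : 0 < a) (hb : 0 ≤ b) (hq1 : 1 ≤ q) (hq2 : q < 2)
    (hne : b ≠ a) :
    b ^ q - q / 2 * (b ^ 2 / a ^ (2 - q)) < (1 - q / 2) * a ^ q := by
  have hA : (0:ℝ) < a ^ q := Real.rpow_pos_of_pos ha q
  have ha2 : (0:ℝ) < a ^ 2 := by positivity
  have hs : (-1:ℝ) ≤ b ^ 2 / a ^ 2 - 1 := by
    have : 0 ≤ b ^ 2 / a ^ 2 := by positivity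
    linarith
  have hs' : b ^ 2 / a ^ 2 - 1 ≠ 0 := by
    intro h
    have hsq : b ^ 2 = a ^ 2 := by
      field_simp at h; linarith
    apply hne
    calc b = Real.sqrt (b ^ 2) := (Real.sqrt_sq hb).symm
      _ = Real.sqrt (a ^ 2) := by rw [hsq]
      _ = a := Real.sqrt_sq ha.le
  have hber := rpow_one_add_lt_one_add_mul_self hs hs' (p := q / 2)
    (by linarith) (by linarith)
  have h1 : (1:ℝ) + (b ^ 2 / a ^ 2 - 1) = b ^ 2 / a ^ 2 := by ring
  rw [h1] at hber
  have hbq : (b ^ 2 / a ^ 2) ^ (q / 2) = b ^ q / a ^ q := by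
    rw [Real.div_rpow (by positivity) (by positivity)]
    congr 1
    · rw [← Real.rpow_natCast b 2, ← Real.rpow_mul hb]; congr 1; push_cast; ring
    · rw [← Real.rpow_natCast a 2, ← Real.rpow_mul ha.le]; congr 1; push_cast; ring
  rw [hbq] at hber
  have hmul := (div_lt_iff₀ hA).mp hber
  rw [aux_rw ha]
  nlinarith [hmul]

lemma aux_le {a b q : ℝ} (ha : 0 < a) (hb : 0 ≤ b) (hq1 : 1 ≤ q) (hq2 : q < 2) :
    b ^ q - q / 2 * (b ^ 2 / a ^ (2 - q)) ≤ (1 - q / 2) * a ^ q := by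
  by_cases h : b = a
  · subst h; exact (aux_eq ha).le
  · exact (aux_lt ha hb hq1 hq2 h).le

/-- Equality holds in inequality (3.11) iff ‖(A·Xk₁−Y)ⁱ‖₂ = ‖(A·Xk−Y)ⁱ‖₂ for every i. -/
theorem stmt_6 {m d n : ℕ} (A : Matrix (Fin m) (Fin d) ℝ) (Y : Matrix (Fin m) (Fin n) ℝ)
    (q : ℝ) (hq1 : 1 ≤ q) (hq2 : q < 2)
    (Xk Xk1 : Matrix (Fin d) (Fin n) ℝ)
    (hrow : ∀ i, (A * Xk - Y) i ≠ 0) :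
    (∑ i, rowNorm (A * Xk1 - Y) i ^ q
      - (q / 2) * ∑ i, rowNorm (A * Xk1 - Y) i ^ 2 / rowNorm (A * Xk - Y) i ^ (2 - q)
      = (1 - q / 2) * ∑ i, rowNorm (A * Xk - Y) i ^ q)
    ↔ ∀ i, rowNorm (A * Xk1 - Y) i = rowNorm (A * Xk - Y) i := by
  set a : Fin m → ℝ := fun i => rowNorm (A * Xk - Y) i with ha_def
  set b : Fin m → ℝ := fun i => rowNorm (A * Xk1 - Y) i with hb_def
  have ha : ∀ i, 0 < a i := fun i => rowNorm_pos (hrow i)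
  have hb : ∀ i, 0 ≤ b i := fun i => rowNorm_nonneg _ i
  have hrw1 : (∑ i, b i ^ q) - q / 2 * ∑ i, (b i ^ 2 / a i ^ (2 - q))
      = ∑ i, (b i ^ q - q / 2 * (b i ^ 2 / a i ^ (2 - q))) := by
    rw [Finset.mul_sum, ← Finset.sum_sub_distrib]
  have hrw2 : (1 - q / 2) * ∑ i, a i ^ q = ∑ i, (1 - q / 2) * a i ^ q :=
    Finset.mul_sum _ _ _
  rw [hrw1, hrw2,
    Finset.sum_eq_sum_iff_of_le (fun i _ => aux_le (ha i) (hb i) hq1 hq2)]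
  constructor
  · intro h i
    by_contra hne
    exact absurd (h i (Finset.mem_univ i)) (aux_lt (ha i) (hb i) hq1 hq2 hne).ne
  · intro h i _
    rw [show b i = a i from h i]
    exact aux_eq (ha i)
end

section
/- Let 0 < p < 2 and let X_k, X_{k+1} ∈ ℝ^{d×n} be such that every row of X_k is nonzero. Then equality holds in the inequality Σ_{i=1}^d ‖X_{k+1}^i‖₂^p − (p/2)·Σ_{i=1}^d ‖X_{k+1}^i‖₂² / ‖X_k^i‖₂^{2−p} ≤ (1 − p/2)·Σ_{i=1}^d ‖X_k^i‖₂^p if and only if ‖X_{k+1}^i‖₂ = ‖X_k^i‖₂ for every i = 1, …, d. -/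
open Matrix

lemma key (p a b : ℝ) (hp0 : 0 < p) (hp2 : p < 2) (ha : 0 ≤ a) (hb : 0 < b) :
    a ^ p ≤ (1 - p / 2) * b ^ p + (p / 2) * (a ^ 2 / b ^ (2 - p)) ∧
    (a ^ p = (1 - p / 2) * b ^ p + (p / 2) * (a ^ 2 / b ^ (2 - p)) ↔ a = b) := by
  have hbp : (0:ℝ) < b ^ p := Real.rpow_pos_of_pos hb p
  have hab : 0 ≤ a / b := div_nonneg ha hb.le
  have hs : (-1:ℝ) ≤ (a / b) ^ 2 - 1 := by nlinarith [sq_nonneg (a / b)]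
  have hθ0 : 0 < p / 2 := by linarith
  have hθ1 : p / 2 < 1 := by linarith
  have hc : ((2:ℕ):ℝ) * (p / 2) = p := by push_cast; ring
  have hpow : ((a / b) ^ 2) ^ (p / 2) = a ^ p / b ^ p := by
    rw [← Real.rpow_natCast (a / b) 2, ← Real.rpow_mul hab, hc, Real.div_rpow ha hb.le]
  have hb2 : b ^ (2 - p) * b ^ p = b ^ 2 := by
    rw [← Real.rpow_natCast b 2, ← Real.rpow_add hb]
    norm_num
  have hbne : b ^ (2 - p) ≠ 0 := (Real.rpow_pos_of_pos hb _).ne'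
  have hx : a ^ 2 / b ^ (2 - p) = (a / b) ^ 2 * b ^ p := by
    rw [div_pow, div_mul_eq_mul_div, div_eq_div_iff hbne (pow_ne_zero 2 hb.ne')]
    linear_combination (-(a ^ 2)) * hb2
  have hrhs : (1 + (p / 2) * ((a / b) ^ 2 - 1)) * b ^ p
      = (1 - p / 2) * b ^ p + (p / 2) * (a ^ 2 / b ^ (2 - p)) := by
    rw [hx]; ring
  constructor
  · have := rpow_one_add_le_one_add_mul_self hs hθ0.le hθ1.le
    rw [add_sub_cancel, hpow] at this
    have h2 := mul_le_mul_of_nonneg_right this hbp.le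
    rw [div_mul_cancel₀ _ hbp.ne', hrhs] at h2
    exact h2
  · constructor
    · intro h
      by_contra hne
      have hs' : (a / b) ^ 2 - 1 ≠ 0 := by
        intro h0
        have h1 : (a / b) ^ 2 = 1 := by linarith
        have h3 : a / b = 1 := by nlinarith
        exact hne (by field_simp at h3; linarith)
      have := rpow_one_add_lt_one_add_mul_self hs hs' hθ0 hθ1
      rw [add_sub_cancel, hpow] at this
      have h2 := mul_lt_mul_of_pos_right this hbp
      rw [div_mul_cancel₀ _ hbp.ne', hrhs] at h2
      linarith [h2, h.ge]
    · rintro rfl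
      have h4 : a ^ 2 / a ^ (2 - p) = a ^ p := by
        rw [div_eq_iff hbne]; linear_combination -hb2
      rw [h4]; ring

/-- Equality holds in inequality (3.12) iff ‖Xk₁ⁱ‖₂ = ‖Xkⁱ‖₂ for every i. -/
theorem stmt_7 {d n : ℕ} (p : ℝ) (hp0 : 0 < p) (hp2 : p < 2)
    (Xk Xk1 : Matrix (Fin d) (Fin n) ℝ)
    (hrow : ∀ i, Xk i ≠ 0) :
    (∑ i, rowNorm Xk1 i ^ p
      - (p / 2) * ∑ i, rowNorm Xk1 i ^ 2 / rowNorm Xk i ^ (2 - p)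
      = (1 - p / 2) * ∑ i, rowNorm Xk i ^ p)
    ↔ ∀ i, rowNorm Xk1 i = rowNorm Xk i := by
  have hb : ∀ i, 0 < rowNorm Xk i := by
    intro i
    apply Real.sqrt_pos.mpr
    obtain ⟨j, hj⟩ := Function.ne_iff.mp (hrow i)
    exact Finset.sum_pos' (fun j _ => sq_nonneg _) ⟨j, Finset.mem_univ j, by simp only [Pi.zero_apply] at hj; exact (pow_pos (abs_pos.mpr hj) 2).trans_eq (sq_abs _)⟩
  have ha : ∀ i, 0 ≤ rowNorm Xk1 i := fun i => Real.sqrt_nonneg _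
  have hk := fun i => key p (rowNorm Xk1 i) (rowNorm Xk i) hp0 hp2 (ha i) (hb i)
  have hstep : (∑ i, rowNorm Xk1 i ^ p
      - (p / 2) * ∑ i, rowNorm Xk1 i ^ 2 / rowNorm Xk i ^ (2 - p)
      = (1 - p / 2) * ∑ i, rowNorm Xk i ^ p)
      ↔ ∑ i, (rowNorm Xk1 i ^ p - (p / 2) * (rowNorm Xk1 i ^ 2 / rowNorm Xk i ^ (2 - p)))
        = ∑ i, (1 - p / 2) * rowNorm Xk i ^ p := by
    rw [Finset.sum_sub_distrib, Finset.mul_sum, Finset.mul_sum]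
  rw [hstep]
  have hle : ∀ i ∈ Finset.univ,
      (rowNorm Xk1 i ^ p - (p / 2) * (rowNorm Xk1 i ^ 2 / rowNorm Xk i ^ (2 - p)))
      ≤ (1 - p / 2) * rowNorm Xk i ^ p := fun i _ => by linarith [(hk i).1]
  rw [Finset.sum_eq_sum_iff_of_le hle]
  constructor
  · intro h i
    exact (hk i).2.mp (by linarith [h i (Finset.mem_univ i)])
  · intro h i _
    have := (hk i).2.mpr (h i)
    linarith
end
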